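/- Let C_1, …, C_L be p×p real symmetric positive semidefinite matrices and let w_1, …, w_L ≥ 0 with Σ_{l=1}^L w_l = 1 (not all zero). Then the functional Ω ↦ Σ_{l=1}^L w_l d_S²(C_l, Ω), over p×p symmetric positive semidefinite matrices Ω, is uniquely minimized at Ω̂ = (Σ_{l=1}^L w_l C_l^{1/2})², the square of the weighted average of the square roots. -/

import Mathlib

open Matrix MeasureTheory ProbabilityTheory

noncomputable def eunorm {p : ℕ} (x : Fin p → ℝ) : ℝ := Real.sqrt (∑ i, x i ^ 2)

noncomputable def frob {p : ℕ} (M : Matrix (Fin p) (Fin p) ℝ) : ℝ :=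
  Real.sqrt (∑ i, ∑ j, M i j ^ 2)

open Classical in
noncomputable def msqrt {p : ℕ} (A : Matrix (Fin p) (Fin p) ℝ) : Matrix (Fin p) (Fin p) ℝ :=
  if h : A.PosSemidef then
    (h.1.eigenvectorUnitary : Matrix (Fin p) (Fin p) ℝ) *
      diagonal ((RCLike.ofReal : ℝ → ℝ) ∘ Real.sqrt ∘ h.1.eigenvalues) *
      (star h.1.eigenvectorUnitary : Matrix (Fin p) (Fin p) ℝ)
  else 0

noncomputable def dS {p : ℕ} (A B : Matrix (Fin p) (Fin p) ℝ) : ℝ := frob (msqrt A - msqrt B)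

noncomputable def mExp {p : ℕ} {Ωs : Type*} [MeasurableSpace Ωs] (μ : Measure Ωs)
    (F : Ωs → Matrix (Fin p) (Fin p) ℝ) : Matrix (Fin p) (Fin p) ℝ :=
  Matrix.of fun i j => ∫ ω, F ω i j ∂μ

noncomputable def covDS {p : ℕ} {Ωs : Type*} [MeasurableSpace Ωs] (μ : Measure Ωs)
    (Y : Ωs → Fin p → ℝ) : Matrix (Fin p) (Fin p) ℝ :=
  (mExp μ fun ω => msqrt (vecMulVec (Y ω - fun r => ∫ ω', Y ω' r ∂μ) (Y ω - fun r => ∫ ω', Y ω' r ∂μ))) *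
  (mExp μ fun ω => msqrt (vecMulVec (Y ω - fun r => ∫ ω', Y ω' r ∂μ) (Y ω - fun r => ∫ ω', Y ω' r ∂μ)))


/-! Taking square roots turns `d_S²` into a squared Frobenius distance. For convex weights the
bias–variance identity `Σ w_l ‖A_l - B‖² = Σ w_l ‖A_l - Ā‖² + ‖Ā - B‖²`, `Ā = Σ w_l A_l`, applied with
`A_l = C_l^{1/2}` and `Ā = Ω̂^{1/2}`, shows that the objective at `W` exceeds its value at `Ω̂` by
exactly `‖Ā - W^{1/2}‖²`. This vanishes only if `W^{1/2} = Ā`, and squaring gives `W = Ω̂`. -/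

open scoped MatrixOrder

theorem Finset.sum_mul_sub_sq_eq_of_sum_eq_one {ι : Type*} (s : Finset ι) (w a : ι → ℝ)
    (hw : ∑ i ∈ s, w i = 1) (r : ℝ) :
    ∑ i ∈ s, w i * (a i - r) ^ 2 =
      ∑ i ∈ s, w i * (a i - ∑ j ∈ s, w j * a j) ^ 2 + (∑ j ∈ s, w j * a j - r) ^ 2 := by
  set m := ∑ j ∈ s, w j * a j
  have hcentered : ∑ i ∈ s, w i * (a i - m) = 0 := by
    simp only [mul_sub, Finset.sum_sub_distrib, ← Finset.sum_mul, hw, one_mul, m, sub_self]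
  calc ∑ i ∈ s, w i * (a i - r) ^ 2
      = ∑ i ∈ s, (w i * (a i - m) ^ 2 + 2 * (m - r) * (w i * (a i - m)) + w i * (m - r) ^ 2) :=
        Finset.sum_congr rfl fun i _ => by ring
    _ = ∑ i ∈ s, w i * (a i - m) ^ 2 + (m - r) ^ 2 := by
        rw [Finset.sum_add_distrib, Finset.sum_add_distrib, ← Finset.mul_sum, hcentered,
          ← Finset.sum_mul, hw]
        ring

theorem frob_sq {p : ℕ} (M : Matrix (Fin p) (Fin p) ℝ) : frob M ^ 2 = ∑ i, ∑ j, M i j ^ 2 :=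
  Real.sq_sqrt (by positivity)

theorem frob_eq_zero_iff {p : ℕ} {M : Matrix (Fin p) (Fin p) ℝ} : frob M = 0 ↔ M = 0 := by
  have hrow : ∀ i, 0 ≤ ∑ j, M i j ^ 2 := fun i => by positivity
  rw [frob, Real.sqrt_eq_zero (Finset.sum_nonneg fun i _ => hrow i),
    Fintype.sum_eq_zero_iff_of_nonneg hrow, ← Matrix.ext_iff]
  simp only [funext_iff, Fintype.sum_eq_zero_iff_of_nonneg (fun _ => sq_nonneg _), Pi.zero_apply,
    sq_eq_zero_iff, Matrix.zero_apply]

theorem sum_mul_frob_sub_sq_eq_of_sum_eq_one {p : ℕ} {ι : Type*} (s : Finset ι) (w : ι → ℝ)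
    (hw : ∑ l ∈ s, w l = 1) (A : ι → Matrix (Fin p) (Fin p) ℝ) (B : Matrix (Fin p) (Fin p) ℝ) :
    ∑ l ∈ s, w l * frob (A l - B) ^ 2 =
      ∑ l ∈ s, w l * frob (A l - ∑ k ∈ s, w k • A k) ^ 2 + frob (∑ k ∈ s, w k • A k - B) ^ 2 := by
  have hswap : ∀ f : ι → Fin p → Fin p → ℝ,
      ∑ l ∈ s, w l * ∑ i, ∑ j, f l i j = ∑ i, ∑ j, ∑ l ∈ s, w l * f l i j := fun f => by
    simp only [Finset.mul_sum]
    exact Finset.sum_comm.trans (Finset.sum_congr rfl fun _ _ => Finset.sum_comm)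
  simp only [frob_sq, hswap, ← Finset.sum_add_distrib]
  refine Finset.sum_congr rfl fun i _ => Finset.sum_congr rfl fun j _ => ?_
  simpa only [Matrix.sub_apply, Matrix.sum_apply, Matrix.smul_apply, smul_eq_mul]
    using Finset.sum_mul_sub_sq_eq_of_sum_eq_one s w (A · i j) hw (B i j)

theorem msqrt_eq_cfcSqrt {p : ℕ} {A : Matrix (Fin p) (Fin p) ℝ} (hA : A.PosSemidef) :
    msqrt A = CFC.sqrt A := by
  rw [msqrt, dif_pos hA, CFC.sqrt_eq_cfc, cfc_nnreal_eq_real _ A, hA.1.cfc_eq,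
    IsHermitian.cfc, Unitary.conjStarAlgAut_apply]
  congr 3
  funext i
  simp [hA.eigenvalues_nonneg i]

theorem posSemidef_msqrt {p : ℕ} {A : Matrix (Fin p) (Fin p) ℝ} (hA : A.PosSemidef) :
    (msqrt A).PosSemidef := by
  rw [msqrt_eq_cfcSqrt hA]
  exact (CFC.sqrt_nonneg A).posSemidef

theorem msqrt_mul_msqrt {p : ℕ} {A : Matrix (Fin p) (Fin p) ℝ} (hA : A.PosSemidef) :
    msqrt A * msqrt A = A := by
  rw [msqrt_eq_cfcSqrt hA]
  exact CFC.sqrt_mul_sqrt_self A hA.nonneg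

theorem msqrt_mul_self {p : ℕ} {S : Matrix (Fin p) (Fin p) ℝ} (hS : S.PosSemidef) :
    msqrt (S * S) = S := by
  rw [msqrt_eq_cfcSqrt (sq S ▸ hS.pow 2)]
  exact CFC.sqrt_mul_self S hS.nonneg

/-- For psd matrices `C₁,…,C_L` and convex weights `w`, the functional
`Ω ↦ Σ w_l d_S²(C_l, Ω)` over psd `Ω` is uniquely minimized at `Ω̂ = (Σ w_l C_l^{1/2})²`. -/
theorem stmt12 {p L : ℕ} (C : Fin L → Matrix (Fin p) (Fin p) ℝ)
    (hC : ∀ l, (C l).PosSemidef)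
    (w : Fin L → ℝ) (hw : ∀ l, 0 ≤ w l) (hsum : ∑ l, w l = 1)
    (Ωhat : Matrix (Fin p) (Fin p) ℝ)
    (hΩhat : Ωhat = (∑ l, w l • msqrt (C l)) * (∑ l, w l • msqrt (C l))) :
    Ωhat.PosSemidef ∧
    (∀ W : Matrix (Fin p) (Fin p) ℝ, W.PosSemidef →
      ∑ l, w l * dS (C l) Ωhat ^ 2 ≤ ∑ l, w l * dS (C l) W ^ 2) ∧
    (∀ W : Matrix (Fin p) (Fin p) ℝ, W.PosSemidef →
      (∑ l, w l * dS (C l) W ^ 2) ≤ (∑ l, w l * dS (C l) Ωhat ^ 2) → W = Ωhat) := by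
  set S := ∑ l, w l • msqrt (C l)
  have hS : S.PosSemidef := posSemidef_sum _ fun l _ => (posSemidef_msqrt (hC l)).smul (hw l)
  have hsqrtΩ : msqrt Ωhat = S := hΩhat ▸ msqrt_mul_self hS
  have hdecomp : ∀ W, ∑ l, w l * dS (C l) W ^ 2 =
      ∑ l, w l * dS (C l) Ωhat ^ 2 + frob (S - msqrt W) ^ 2 := fun W => by
    simp only [dS, hsqrtΩ]
    exact sum_mul_frob_sub_sq_eq_of_sum_eq_one _ w hsum _ _
  refine ⟨hΩhat ▸ sq S ▸ hS.pow 2, fun W _ => ?_, fun W hW hle => ?_⟩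
  · rw [hdecomp W]
    exact le_add_of_nonneg_right (sq_nonneg _)
  · have hfrob : frob (S - msqrt W) ^ 2 = 0 := by
      rw [hdecomp W] at hle
      linarith [sq_nonneg (frob (S - msqrt W))]
    have hSW : S = msqrt W :=
      sub_eq_zero.mp (frob_eq_zero_iff.mp (pow_eq_zero_iff two_ne_zero |>.mp hfrob))
    rw [← msqrt_mul_msqrt hW, ← hSW, hΩhat]
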